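/- arXiv:2002.10135 — 2 statements merged into one kernel-verified Lean document; each statement's English description precedes it below -/
import Mathlib

section
/- Let 𝒱 be the v-transform with fulcrum δ ∈ (0,1) and generator Ψ, where Ψ is differentiable on (0,1) with strictly positive derivative, let U be uniformly distributed on [0,1] and V = 𝒱(U). Then for every bounded measurable function g : [0,1]² → ℝ, E[g(U, V)] = ∫₀¹ ( Δ(v)·g(𝒱⁻¹(v), v) + (1−Δ(v))·g(𝒱⁻¹(v)+v, v) ) dv; in particular, conditional on V = v ≠ 0, U equals 𝒱⁻¹(v) with probability Δ(v) and 𝒱⁻¹(v)+v with probability 1−Δ(v). -/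
/-!
STATEMENT 2: law of `(U, 𝒱(U))` for uniform `U`: for every bounded measurable `g`,
`E[g(U,V)] = ∫₀¹ ( Δ(v)·g(𝒱⁻¹(v), v) + (1-Δ(v))·g(𝒱⁻¹(v)+v, v) ) dv`,
i.e. conditionally on `V = v ≠ 0`, `U` takes the value `𝒱⁻¹(v)` with probability
`Δ(v)` and `𝒱⁻¹(v) + v` with probability `1 - Δ(v)`.
-/

open Set MeasureTheory

/-- The v-transform with fulcrum `δ` and generator `Ψ` (with inverse `Ψinv`):
`𝒱(u) = (1-u) - (1-δ)·Ψ(u/δ)` for `u ≤ δ` and `𝒱(u) = u - δ·Ψinv((1-u)/(1-δ))`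
for `u > δ`. -/
noncomputable def vt (δ : ℝ) (Ψ Ψinv : ℝ → ℝ) (u : ℝ) : ℝ :=
  if u ≤ δ then (1 - u) - (1 - δ) * Ψ (u / δ)
  else u - δ * Ψinv ((1 - u) / (1 - δ))

/-- Left-branch inverse `𝒱⁻¹(v) = inf {u ∈ [0,1] : 𝒱 u = v}`. -/
noncomputable def vtInv (V : ℝ → ℝ) (v : ℝ) : ℝ :=
  sInf {u | u ∈ Set.Icc (0:ℝ) 1 ∧ V u = v}

/-- Conditional down probability `Δ(v) = -1 / 𝒱′(𝒱⁻¹(v))`. -/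
noncomputable def vtDelta (V : ℝ → ℝ) (v : ℝ) : ℝ :=
  -1 / deriv V (vtInv V v)

/-- Stochastic inversion function of a v-transform:
`𝒱⁻¹ₛ(v,w) = 𝒱⁻¹(v)` if `w ≤ Δ(v)`, and `v + 𝒱⁻¹(v)` otherwise. -/
noncomputable def vtSInv (V : ℝ → ℝ) (v w : ℝ) : ℝ :=
  if w ≤ vtDelta V v then vtInv V v else v + vtInv V v

/-!
Split `[0,1]` at the fulcrum. On the left branch the substitution `v = 𝒱(u)` has Jacobian
`|𝒱′(u)| = 1 + s(u)`, with `s(u) = (1-δ)/δ · Ψ′(u/δ)`, and `Δ(𝒱(u)) = 1/(1 + s(u))`. The right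
branch is parametrised by `u ↦ u + 𝒱(u) = 1 - (1-δ)Ψ(u/δ)` for `u ∈ (0,δ)`, which has the same image
under `𝒱` as `u` and Jacobian `s(u)`. Thus both sides equal
`∫₀^δ (g(u, 𝒱 u) + s(u) g(u + 𝒱 u, 𝒱 u)) du`; parametrising by the left branch avoids
differentiating `𝒱⁻¹` or `Ψ⁻¹`.
-/

structure IsVTransformGenerator (Ψ : ℝ → ℝ) : Prop where
  continuousOn : ContinuousOn Ψ (Icc 0 1)
  strictMonoOn : StrictMonoOn Ψ (Icc 0 1)
  map_zero : Ψ 0 = 0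
  map_one : Ψ 1 = 1

namespace IsVTransformGenerator

variable {Ψ Ψinv : ℝ → ℝ}

lemma surjOn (hΨ : IsVTransformGenerator Ψ) : SurjOn Ψ (Icc 0 1) (Icc 0 1) := by
  have := intermediate_value_Icc zero_le_one hΨ.continuousOn
  rwa [hΨ.map_zero, hΨ.map_one] at this

lemma monotoneOn_of_leftInvOn (hΨ : IsVTransformGenerator Ψ)
    (hΨinv : LeftInvOn Ψinv Ψ (Icc 0 1)) : MonotoneOn Ψinv (Icc 0 1) := by
  rintro _ hx _ hy hxy
  obtain ⟨a, ha, rfl⟩ := hΨ.surjOn hx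
  obtain ⟨b, hb, rfl⟩ := hΨ.surjOn hy
  rw [hΨinv ha, hΨinv hb]
  exact (hΨ.strictMonoOn.le_iff_le ha hb).1 hxy

end IsVTransformGenerator

lemma setIntegral_Icc_eq_add_Ioo {E : Type*} [NormedAddCommGroup E] [NormedSpace ℝ E]
    {f : ℝ → E} {a b c : ℝ} (hac : a ≤ c) (hcb : c ≤ b) (hf : IntegrableOn f (Icc a b)) :
    ∫ x in Icc a b, f x = (∫ x in Ioo a c, f x) + ∫ x in Ioo c b, f x := by
  have hleft : IntervalIntegrable f volume a c :=
    (intervalIntegrable_iff_integrableOn_Icc_of_le hac).2 (hf.mono_set (Icc_subset_Icc_right hcb))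
  have hright : IntervalIntegrable f volume c b :=
    (intervalIntegrable_iff_integrableOn_Icc_of_le hcb).2 (hf.mono_set (Icc_subset_Icc_left hac))
  rw [integral_Icc_eq_integral_Ioc, ← intervalIntegral.integral_of_le (hac.trans hcb),
    ← intervalIntegral.integral_add_adjacent_intervals hleft hright,
    intervalIntegral.integral_of_le hac, intervalIntegral.integral_of_le hcb,
    integral_Ioc_eq_integral_Ioo, integral_Ioc_eq_integral_Ioo]

lemma integrable_comp_of_bounded {μ : Measure ℝ} [IsFiniteMeasure μ] {g : ℝ → ℝ → ℝ}
    (hgm : Measurable (Function.uncurry g)) (hgb : ∃ C, ∀ x y, |g x y| ≤ C) {V : ℝ → ℝ}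
    (hV : AEMeasurable V μ) : Integrable (fun u => g u (V u)) μ := by
  obtain ⟨C, hC⟩ := hgb
  exact Integrable.of_bound (hgm.comp_aemeasurable (aemeasurable_id.prodMk hV)).aestronglyMeasurable
    C (ae_of_all _ fun u => hC u (V u))

noncomputable def vtLeft (δ : ℝ) (Ψ : ℝ → ℝ) (u : ℝ) : ℝ :=
  (1 - u) - (1 - δ) * Ψ (u / δ)

/-- For `u ∈ [0, δ]`, `vtDual δ Ψ u = u + 𝒱(u)` is the point of the right branch with the same
image under `𝒱` as `u`. -/
noncomputable def vtDual (δ : ℝ) (Ψ : ℝ → ℝ) (u : ℝ) : ℝ :=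
  1 - (1 - δ) * Ψ (u / δ)

noncomputable def vtDualSpeed (δ : ℝ) (Ψ : ℝ → ℝ) (u : ℝ) : ℝ :=
  (1 - δ) / δ * deriv Ψ (u / δ)

section VTransform

variable {δ : ℝ} {Ψ Ψinv : ℝ → ℝ} {u : ℝ}

lemma vt_of_le (h : u ≤ δ) : vt δ Ψ Ψinv u = vtLeft δ Ψ u :=
  if_pos h

lemma vt_of_lt (h : δ < u) : vt δ Ψ Ψinv u = u - δ * Ψinv ((1 - u) / (1 - δ)) :=
  if_neg h.not_ge

lemma vtDual_eq_add_vtLeft : vtDual δ Ψ u = u + vtLeft δ Ψ u := by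
  unfold vtDual vtLeft
  ring

lemma vtLeft_eq_vtDual_sub : vtLeft δ Ψ = fun u => vtDual δ Ψ u - u := by
  funext u
  rw [vtDual_eq_add_vtLeft]
  ring

lemma vtDual_zero (hΨ0 : Ψ 0 = 0) : vtDual δ Ψ 0 = 1 := by
  simp [vtDual, hΨ0]

lemma vtDual_self (hδ : δ ≠ 0) (hΨ1 : Ψ 1 = 1) : vtDual δ Ψ δ = δ := by
  simp [vtDual, div_self hδ, hΨ1]

lemma vtLeft_zero (hΨ0 : Ψ 0 = 0) : vtLeft δ Ψ 0 = 1 := by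
  simp [vtLeft, hΨ0]

lemma vtLeft_self (hδ : δ ≠ 0) (hΨ1 : Ψ 1 = 1) : vtLeft δ Ψ δ = 0 := by
  simp [vtLeft, div_self hδ, hΨ1]

lemma mapsTo_div_Icc (hδ : 0 < δ) : MapsTo (· / δ) (Icc 0 δ) (Icc 0 1) :=
  fun _ hu => ⟨div_nonneg hu.1 hδ.le, (div_le_one hδ).2 hu.2⟩

lemma mapsTo_div_Ioo (hδ : 0 < δ) : MapsTo (· / δ) (Ioo 0 δ) (Ioo 0 1) :=
  fun _ hu => ⟨div_pos hu.1 hδ, (div_lt_one hδ).2 hu.2⟩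

lemma continuousOn_vtDual (hδ : 0 < δ) (hΨc : ContinuousOn Ψ (Icc 0 1)) :
    ContinuousOn (vtDual δ Ψ) (Icc 0 δ) :=
  continuousOn_const.sub
    (continuousOn_const.mul (hΨc.comp (continuousOn_id.div_const δ) (mapsTo_div_Icc hδ)))

lemma continuousOn_vtLeft (hδ : 0 < δ) (hΨc : ContinuousOn Ψ (Icc 0 1)) :
    ContinuousOn (vtLeft δ Ψ) (Icc 0 δ) := by
  rw [vtLeft_eq_vtDual_sub]
  exact (continuousOn_vtDual hδ hΨc).sub continuousOn_id

lemma strictAntiOn_vtDual (hδ : δ ∈ Ioo 0 1) (hΨm : StrictMonoOn Ψ (Icc 0 1)) :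
    StrictAntiOn (vtDual δ Ψ) (Icc 0 δ) := by
  intro a ha b hb hab
  have h1δ : 0 < 1 - δ := sub_pos.2 hδ.2
  have := hΨm (mapsTo_div_Icc hδ.1 ha) (mapsTo_div_Icc hδ.1 hb) (div_lt_div_of_pos_right hab hδ.1)
  unfold vtDual
  gcongr

lemma strictAntiOn_vtLeft (hδ : δ ∈ Ioo 0 1) (hΨm : StrictMonoOn Ψ (Icc 0 1)) :
    StrictAntiOn (vtLeft δ Ψ) (Icc 0 δ) := by
  intro a ha b hb hab
  have := strictAntiOn_vtDual hδ hΨm ha hb hab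
  rw [vtDual_eq_add_vtLeft, vtDual_eq_add_vtLeft] at this
  linarith

lemma image_vtLeft_Ioo (hδ : δ ∈ Ioo 0 1) (hΨ : IsVTransformGenerator Ψ) :
    vtLeft δ Ψ '' Ioo 0 δ = Ioo 0 1 := by
  rw [(continuousOn_vtLeft hδ.1 hΨ.continuousOn).image_Ioo_of_strictAntiOn hδ.1.le
    (strictAntiOn_vtLeft hδ hΨ.strictMonoOn), vtLeft_zero hΨ.map_zero,
    vtLeft_self hδ.1.ne' hΨ.map_one]

lemma image_vtDual_Ioo (hδ : δ ∈ Ioo 0 1) (hΨ : IsVTransformGenerator Ψ) :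
    vtDual δ Ψ '' Ioo 0 δ = Ioo δ 1 := by
  rw [(continuousOn_vtDual hδ.1 hΨ.continuousOn).image_Ioo_of_strictAntiOn hδ.1.le
    (strictAntiOn_vtDual hδ hΨ.strictMonoOn), vtDual_zero hΨ.map_zero,
    vtDual_self hδ.1.ne' hΨ.map_one]

lemma vtInv_vtLeft (hδ : δ ∈ Ioo 0 1) (hΨm : StrictMonoOn Ψ (Icc 0 1)) (hu : u ∈ Icc 0 δ) :
    vtInv (vt δ Ψ Ψinv) (vtLeft δ Ψ u) = u := by
  refine IsLeast.csInf_eq ⟨⟨⟨hu.1, hu.2.trans hδ.2.le⟩, vt_of_le hu.2⟩, ?_⟩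
  rintro w ⟨hw, hvw⟩
  rcases le_or_gt w δ with hwδ | hδw
  · rw [vt_of_le hwδ] at hvw
    exact ((strictAntiOn_vtLeft hδ hΨm).injOn ⟨hw.1, hwδ⟩ hu hvw).ge
  · exact hu.2.trans hδw.le

lemma vt_vtDual (hδ : δ ∈ Ioo 0 1) (hΨm : StrictMonoOn Ψ (Icc 0 1)) (hΨ1 : Ψ 1 = 1)
    (hΨinv : LeftInvOn Ψinv Ψ (Icc 0 1)) (hu : u ∈ Ico 0 δ) :
    vt δ Ψ Ψinv (vtDual δ Ψ u) = vtLeft δ Ψ u := by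
  have hδu : δ < vtDual δ Ψ u := by
    simpa only [vtDual_self hδ.1.ne' hΨ1] using
      strictAntiOn_vtDual hδ hΨm ⟨hu.1, hu.2.le⟩ (right_mem_Icc.2 hδ.1.le) hu.2
  have harg : (1 - vtDual δ Ψ u) / (1 - δ) = Ψ (u / δ) := by
    rw [vtDual, sub_sub_cancel, mul_div_cancel_left₀ _ (sub_pos.2 hδ.2).ne']
  rw [vt_of_lt hδu, harg, hΨinv (mapsTo_div_Icc hδ.1 ⟨hu.1, hu.2.le⟩),
    mul_div_cancel₀ _ hδ.1.ne', vtDual_eq_add_vtLeft, add_sub_cancel_left]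

lemma hasDerivAt_vtDual (hd : DifferentiableAt ℝ Ψ (u / δ)) :
    HasDerivAt (vtDual δ Ψ) (-vtDualSpeed δ Ψ u) u := by
  refine (((hd.hasDerivAt.comp u ((hasDerivAt_id u).div_const δ)).const_mul (1 - δ)).const_sub
    1).congr_deriv ?_
  unfold vtDualSpeed
  ring

lemma hasDerivAt_vtLeft (hd : DifferentiableAt ℝ Ψ (u / δ)) :
    HasDerivAt (vtLeft δ Ψ) (-1 - vtDualSpeed δ Ψ u) u := by
  rw [vtLeft_eq_vtDual_sub]
  exact ((hasDerivAt_vtDual hd).sub (hasDerivAt_id u)).congr_deriv (by ring)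

lemma deriv_vt (hu : u < δ) (hd : DifferentiableAt ℝ Ψ (u / δ)) :
    deriv (vt δ Ψ Ψinv) u = -1 - vtDualSpeed δ Ψ u :=
  ((hasDerivAt_vtLeft hd).congr_of_eventuallyEq
    (Filter.eventually_of_mem (Iio_mem_nhds hu) fun _ hx => vt_of_le (le_of_lt hx))).deriv

lemma vtDelta_vtLeft (hδ : δ ∈ Ioo 0 1) (hΨm : StrictMonoOn Ψ (Icc 0 1)) (hu : u ∈ Ioo 0 δ)
    (hd : DifferentiableAt ℝ Ψ (u / δ)) :
    vtDelta (vt δ Ψ Ψinv) (vtLeft δ Ψ u) = (1 + vtDualSpeed δ Ψ u)⁻¹ := by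
  rw [vtDelta, vtInv_vtLeft hδ hΨm (Ioo_subset_Icc_self hu), deriv_vt hu.2 hd,
    show -1 - vtDualSpeed δ Ψ u = -(1 + vtDualSpeed δ Ψ u) by ring, neg_div_neg_eq, one_div]

lemma vtDualSpeed_nonneg (hδ : δ ∈ Ioo 0 1) (hΨ' : ∀ x ∈ Ioo (0:ℝ) 1, 0 ≤ deriv Ψ x)
    (hu : u ∈ Ioo 0 δ) : 0 ≤ vtDualSpeed δ Ψ u :=
  mul_nonneg (div_pos (sub_pos.2 hδ.2) hδ.1).le (hΨ' _ (mapsTo_div_Ioo hδ.1 hu))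

lemma antitoneOn_vt (hδ : δ ∈ Ioo 0 1) (hΨm : StrictMonoOn Ψ (Icc 0 1)) :
    AntitoneOn (vt δ Ψ Ψinv) (Icc 0 δ) := by
  intro a ha b hb hab
  rw [vt_of_le ha.2, vt_of_le hb.2]
  exact (strictAntiOn_vtLeft hδ hΨm).antitoneOn ha hb hab

lemma monotoneOn_vt (hδ : δ ∈ Ioo 0 1) (hΨ : IsVTransformGenerator Ψ)
    (hΨinv : LeftInvOn Ψinv Ψ (Icc 0 1)) : MonotoneOn (vt δ Ψ Ψinv) (Ioc δ 1) := by
  have h1δ : 0 < 1 - δ := sub_pos.2 hδ.2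
  have hmem : ∀ x ∈ Ioc δ 1, (1 - x) / (1 - δ) ∈ Icc 0 1 := fun x hx =>
    ⟨div_nonneg (sub_nonneg.2 hx.2) h1δ.le, (div_le_one h1δ).2 (by linarith [hx.1])⟩
  intro a ha b hb hab
  have := hΨ.monotoneOn_of_leftInvOn hΨinv (hmem b hb) (hmem a ha) (by gcongr)
  rw [vt_of_lt ha.1, vt_of_lt hb.1]
  linarith [mul_le_mul_of_nonneg_left this hδ.1.le]

lemma aemeasurable_vt (hδ : δ ∈ Ioo 0 1) (hΨ : IsVTransformGenerator Ψ)
    (hΨinv : LeftInvOn Ψinv Ψ (Icc 0 1)) :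
    AEMeasurable (vt δ Ψ Ψinv) (volume.restrict (Icc 0 1)) := by
  rw [← Icc_union_Ioc_eq_Icc hδ.1.le hδ.2.le, aemeasurable_union_iff]
  exact ⟨aemeasurable_restrict_of_antitoneOn measurableSet_Icc (antitoneOn_vt hδ hΨ.strictMonoOn),
    aemeasurable_restrict_of_monotoneOn measurableSet_Ioc (monotoneOn_vt hδ hΨ hΨinv)⟩

lemma integral_Ioo_eq_integral_vtLeft (hδ : δ ∈ Ioo 0 1) (hΨ : IsVTransformGenerator Ψ)
    (hΨd : ∀ x ∈ Ioo (0:ℝ) 1, DifferentiableAt ℝ Ψ x) (hΨ' : ∀ x ∈ Ioo (0:ℝ) 1, 0 ≤ deriv Ψ x)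
    (f : ℝ → ℝ) :
    ∫ v in Ioo 0 1, f v = ∫ u in Ioo 0 δ, (1 + vtDualSpeed δ Ψ u) * f (vtLeft δ Ψ u) := by
  rw [← image_vtLeft_Ioo hδ hΨ, integral_image_eq_integral_abs_deriv_smul measurableSet_Ioo
    (fun u hu => (hasDerivAt_vtLeft (hΨd _ (mapsTo_div_Ioo hδ.1 hu))).hasDerivWithinAt)
    ((strictAntiOn_vtLeft hδ hΨ.strictMonoOn).injOn.mono Ioo_subset_Icc_self)]
  refine setIntegral_congr_fun measurableSet_Ioo fun u hu => ?_
  rw [show -1 - vtDualSpeed δ Ψ u = -(1 + vtDualSpeed δ Ψ u) by ring, abs_neg,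
    abs_of_nonneg (by linarith [vtDualSpeed_nonneg hδ hΨ' hu]), smul_eq_mul]

lemma integral_Ioo_eq_integral_vtDual (hδ : δ ∈ Ioo 0 1) (hΨ : IsVTransformGenerator Ψ)
    (hΨd : ∀ x ∈ Ioo (0:ℝ) 1, DifferentiableAt ℝ Ψ x) (hΨ' : ∀ x ∈ Ioo (0:ℝ) 1, 0 ≤ deriv Ψ x)
    (f : ℝ → ℝ) :
    ∫ w in Ioo δ 1, f w = ∫ u in Ioo 0 δ, vtDualSpeed δ Ψ u * f (vtDual δ Ψ u) := by
  rw [← image_vtDual_Ioo hδ hΨ, integral_image_eq_integral_abs_deriv_smul measurableSet_Ioo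
    (fun u hu => (hasDerivAt_vtDual (hΨd _ (mapsTo_div_Ioo hδ.1 hu))).hasDerivWithinAt)
    ((strictAntiOn_vtDual hδ hΨ.strictMonoOn).injOn.mono Ioo_subset_Icc_self)]
  refine setIntegral_congr_fun measurableSet_Ioo fun u hu => ?_
  rw [abs_neg, abs_of_nonneg (vtDualSpeed_nonneg hδ hΨ' hu), smul_eq_mul]

lemma integrableOn_Ioo_iff_vtDual (hδ : δ ∈ Ioo 0 1) (hΨ : IsVTransformGenerator Ψ)
    (hΨd : ∀ x ∈ Ioo (0:ℝ) 1, DifferentiableAt ℝ Ψ x) (hΨ' : ∀ x ∈ Ioo (0:ℝ) 1, 0 ≤ deriv Ψ x)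
    (f : ℝ → ℝ) :
    IntegrableOn f (Ioo δ 1) ↔
      IntegrableOn (fun u => vtDualSpeed δ Ψ u * f (vtDual δ Ψ u)) (Ioo 0 δ) := by
  rw [← image_vtDual_Ioo hδ hΨ, integrableOn_image_iff_integrableOn_abs_deriv_smul
    measurableSet_Ioo
    (fun u hu => (hasDerivAt_vtDual (hΨd _ (mapsTo_div_Ioo hδ.1 hu))).hasDerivWithinAt)
    ((strictAntiOn_vtDual hδ hΨ.strictMonoOn).injOn.mono Ioo_subset_Icc_self)]
  refine integrableOn_congr_fun (fun u hu => ?_) measurableSet_Ioo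
  rw [abs_neg, abs_of_nonneg (vtDualSpeed_nonneg hδ hΨ' hu), smul_eq_mul]

lemma integral_vtDelta_mixture (hδ : δ ∈ Ioo 0 1) (hΨ : IsVTransformGenerator Ψ)
    (hΨd : ∀ x ∈ Ioo (0:ℝ) 1, DifferentiableAt ℝ Ψ x) (hΨ' : ∀ x ∈ Ioo (0:ℝ) 1, 0 ≤ deriv Ψ x)
    (g : ℝ → ℝ → ℝ) :
    ∫ v in Icc (0:ℝ) 1,
        (vtDelta (vt δ Ψ Ψinv) v * g (vtInv (vt δ Ψ Ψinv) v) v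
          + (1 - vtDelta (vt δ Ψ Ψinv) v) * g (vtInv (vt δ Ψ Ψinv) v + v) v)
      = ∫ u in Ioo 0 δ,
          (g u (vtLeft δ Ψ u) + vtDualSpeed δ Ψ u * g (vtDual δ Ψ u) (vtLeft δ Ψ u)) := by
  rw [integral_Icc_eq_integral_Ioo, integral_Ioo_eq_integral_vtLeft hδ hΨ hΨd hΨ']
  refine setIntegral_congr_fun measurableSet_Ioo fun u hu => ?_
  have hs := vtDualSpeed_nonneg hδ hΨ' hu
  rw [vtDelta_vtLeft hδ hΨ.strictMonoOn hu (hΨd _ (mapsTo_div_Ioo hδ.1 hu)),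
    vtInv_vtLeft hδ hΨ.strictMonoOn (Ioo_subset_Icc_self hu), ← vtDual_eq_add_vtLeft]
  field_simp
  ring

end VTransform


theorem stmt_2_general {Ω : Type*} [MeasurableSpace Ω] (P : Measure Ω)
    (δ : ℝ) (hδ : δ ∈ Set.Ioo (0:ℝ) 1) (Ψ Ψinv : ℝ → ℝ)
    (hΨc : ContinuousOn Ψ (Set.Icc 0 1)) (hΨm : StrictMonoOn Ψ (Set.Icc 0 1))
    (hΨ0 : Ψ 0 = 0) (hΨ1 : Ψ 1 = 1)
    (hΨinv : ∀ x ∈ Set.Icc (0:ℝ) 1, Ψinv (Ψ x) = x ∧ Ψ (Ψinv x) = x)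
    (hΨd : ∀ x ∈ Set.Ioo (0:ℝ) 1, DifferentiableAt ℝ Ψ x ∧ 0 < deriv Ψ x)
    (U : Ω → ℝ) (hUm : Measurable U)
    (hU : Measure.map U P = volume.restrict (Set.Icc (0:ℝ) 1))
    (g : ℝ → ℝ → ℝ) (hgm : Measurable (Function.uncurry g))
    (hgb : ∃ C, ∀ x y, |g x y| ≤ C) :
    ∫ ω, g (U ω) (vt δ Ψ Ψinv (U ω)) ∂P
      = ∫ v in Set.Icc (0:ℝ) 1,
          (vtDelta (vt δ Ψ Ψinv) v * g (vtInv (vt δ Ψ Ψinv) v) v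
            + (1 - vtDelta (vt δ Ψ Ψinv) v) * g (vtInv (vt δ Ψ Ψinv) v + v) v) := by
  have hΨ : IsVTransformGenerator Ψ := ⟨hΨc, hΨm, hΨ0, hΨ1⟩
  have hΨinv' : LeftInvOn Ψinv Ψ (Icc 0 1) := fun x hx => (hΨinv x hx).1
  have hΨdiff := fun x hx => (hΨd x hx).1
  have hΨ'nonneg := fun x hx => (hΨd x hx).2.le
  set V := vt δ Ψ Ψinv
  have hint : IntegrableOn (fun u => g u (V u)) (Icc 0 1) :=
    integrable_comp_of_bounded hgm hgb (aemeasurable_vt hδ hΨ hΨinv')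
  have hleft : EqOn (fun u => g u (V u)) (fun u => g u (vtLeft δ Ψ u)) (Ioo 0 δ) :=
    fun u hu => by simp only [V, vt_of_le hu.2.le]
  have hright : EqOn (fun u => vtDualSpeed δ Ψ u * g (vtDual δ Ψ u) (V (vtDual δ Ψ u)))
      (fun u => vtDualSpeed δ Ψ u * g (vtDual δ Ψ u) (vtLeft δ Ψ u)) (Ioo 0 δ) :=
    fun u hu => by simp only [V, vt_vtDual hδ hΨm hΨ1 hΨinv' (Ioo_subset_Ico_self hu)]
  have hint_left := (hint.mono_set (Ioo_subset_Icc_self.trans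
    (Icc_subset_Icc_right hδ.2.le))).congr_fun hleft measurableSet_Ioo
  have hint_right := ((integrableOn_Ioo_iff_vtDual hδ hΨ hΨdiff hΨ'nonneg _).1 (hint.mono_set
    (Ioo_subset_Icc_self.trans (Icc_subset_Icc_left hδ.1.le)))).congr_fun hright measurableSet_Ioo
  calc ∫ ω, g (U ω) (V (U ω)) ∂P
      = ∫ u in Icc 0 1, g u (V u) := by
        rw [← hU, integral_map hUm.aemeasurable (hU ▸ hint.aestronglyMeasurable)]
    _ = (∫ u in Ioo 0 δ, g u (V u)) + ∫ w in Ioo δ 1, g w (V w) :=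
        setIntegral_Icc_eq_add_Ioo hδ.1.le hδ.2.le hint
    _ = (∫ u in Ioo 0 δ, g u (vtLeft δ Ψ u))
          + ∫ u in Ioo 0 δ, vtDualSpeed δ Ψ u * g (vtDual δ Ψ u) (vtLeft δ Ψ u) := by
        rw [integral_Ioo_eq_integral_vtDual hδ hΨ hΨdiff hΨ'nonneg, setIntegral_congr_fun
          measurableSet_Ioo hleft, setIntegral_congr_fun measurableSet_Ioo hright]
    _ = _ := by
        rw [← integral_add hint_left hint_right, integral_vtDelta_mixture hδ hΨ hΨdiff hΨ'nonneg]

theorem stmt_2 {Ω : Type*} [MeasurableSpace Ω] (P : Measure Ω) [IsProbabilityMeasure P]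
    (δ : ℝ) (hδ : δ ∈ Set.Ioo (0:ℝ) 1) (Ψ Ψinv : ℝ → ℝ)
    (hΨc : ContinuousOn Ψ (Set.Icc 0 1)) (hΨm : StrictMonoOn Ψ (Set.Icc 0 1))
    (hΨ0 : Ψ 0 = 0) (hΨ1 : Ψ 1 = 1)
    (hΨinv : ∀ x ∈ Set.Icc (0:ℝ) 1, Ψinv (Ψ x) = x ∧ Ψ (Ψinv x) = x)
    (hΨd : ∀ x ∈ Set.Ioo (0:ℝ) 1, DifferentiableAt ℝ Ψ x ∧ 0 < deriv Ψ x)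
    (U : Ω → ℝ) (hUm : Measurable U)
    (hU : Measure.map U P = volume.restrict (Set.Icc (0:ℝ) 1))
    (g : ℝ → ℝ → ℝ) (hgm : Measurable (Function.uncurry g))
    (hgb : ∃ C, ∀ x y, |g x y| ≤ C) :
    ∫ ω, g (U ω) (vt δ Ψ Ψinv (U ω)) ∂P
      = ∫ v in Set.Icc (0:ℝ) 1,
          (vtDelta (vt δ Ψ Ψinv) v * g (vtInv (vt δ Ψ Ψinv) v) v
            + (1 - vtDelta (vt δ Ψ Ψinv) v) * g (vtInv (vt δ Ψ Ψinv) v + v) v) :=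
  stmt_2_general P δ hδ Ψ Ψinv hΨc hΨm hΨ0 hΨ1 hΨinv hΨd U hUm hU g hgm hgb
end

section
/- Let 𝒱 be the v-transform with fulcrum δ ∈ (0,1) and generator Ψ, and let F_X be a continuous strictly increasing cdf on ℝ mapping onto (0,1). Define μ_T = F_X⁻¹(δ) and, for x ≥ 0, g_T(x) = F_X⁻¹( F_X(μ_T − x) + 𝒱(F_X(μ_T − x)) ) − μ_T. Then g_T is continuous and strictly increasing on [0,∞) with g_T(0) = 0, and the construction 𝒱̃(u) = F_X(μ_T + g_T(μ_T − F_X⁻¹(u))) − u for u ≤ δ, 𝒱̃(u) = u − F_X(μ_T − g_T⁻¹(F_X⁻¹(u) − μ_T)) for u > δ, recovers 𝒱, i.e. 𝒱̃ = 𝒱 on [0,1]. -/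
/-!
STATEMENT 8: recovery of a volatility proxy profile from a v-transform: given the
v-transform `𝒱` with fulcrum `δ` and generator `Ψ` and a continuous strictly
increasing cdf `F_X` onto `(0,1)`, the function
`g_T(x) = F_X⁻¹(F_X(μ_T - x) + 𝒱(F_X(μ_T - x))) - μ_T` (with `μ_T = F_X⁻¹(δ)`) is
a valid profile (continuous, strictly increasing, `g_T(0) = 0`) and the proxy
construction with change point `μ_T` and profile `g_T` recovers `𝒱`.
-/

open Set MeasureTheory

theorem stmt_8
    (δ : ℝ) (hδ : δ ∈ Set.Ioo (0:ℝ) 1) (Ψ Ψinv : ℝ → ℝ)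
    (hΨc : ContinuousOn Ψ (Set.Icc 0 1)) (hΨm : StrictMonoOn Ψ (Set.Icc 0 1))
    (hΨ0 : Ψ 0 = 0) (hΨ1 : Ψ 1 = 1)
    (hΨinv : ∀ x ∈ Set.Icc (0:ℝ) 1, Ψinv (Ψ x) = x ∧ Ψ (Ψinv x) = x)
    -- `F` is a continuous strictly increasing cdf mapping `ℝ` onto `(0,1)`
    (F : ℝ → ℝ) (hFc : Continuous F) (hFm : StrictMono F)
    (hFr : Set.range F = Set.Ioo 0 1)
    (Finv : ℝ → ℝ) (hFinv : ∀ u ∈ Set.Ioo (0:ℝ) 1, F (Finv u) = u)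
    -- the change point `μ_T = F⁻¹(δ)`
    (μT : ℝ) (hμT : μT = Finv δ)
    -- the implied profile function
    (g : ℝ → ℝ)
    (hgdef : ∀ x ∈ Set.Ici (0:ℝ),
      g x = Finv (F (μT - x) + vt δ Ψ Ψinv (F (μT - x))) - μT)
    (ginv : ℝ → ℝ) (hginv : ∀ x ∈ Set.Ici (0:ℝ), ginv (g x) = x)
    (hginv' : ∀ y ∈ Set.Ici (0:ℝ), 0 ≤ ginv y ∧ g (ginv y) = y) :
    -- `g` is a valid profile function:
    ContinuousOn g (Set.Ici 0) ∧ StrictMonoOn g (Set.Ici 0) ∧ g 0 = 0 ∧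
    -- and the construction recovers `𝒱`:
    ∀ u ∈ Set.Ioo (0:ℝ) 1,
      vt δ Ψ Ψinv u =
        if u ≤ δ then F (μT + g (μT - Finv u)) - u
        else u - F (μT - ginv (Finv u - μT)) := by
  obtain ⟨hδ0, hδ1⟩ := hδ
  have hFmem : ∀ x, F x ∈ Set.Ioo (0:ℝ) 1 := fun x => hFr ▸ Set.mem_range_self x
  have hFinvF : ∀ x, Finv (F x) = x := fun x => hFm.injective (hFinv _ (hFmem x))
  have hFμ : F μT = δ := by rw [hμT]; exact hFinv δ ⟨hδ0, hδ1⟩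
  have hΨpos : ∀ t : ℝ, 0 < t → t ≤ 1 → 0 < Ψ t := by
    intro t ht ht1
    have := hΨm (Set.left_mem_Icc.2 zero_le_one) ⟨le_of_lt ht, ht1⟩ ht
    rwa [hΨ0] at this
  have hΨle : ∀ t : ℝ, 0 ≤ t → t ≤ 1 → Ψ t ≤ 1 := by
    intro t ht ht1
    rcases eq_or_lt_of_le ht1 with h | h
    · rw [h, hΨ1]
    · have := hΨm ⟨ht, ht1⟩ (Set.right_mem_Icc.2 zero_le_one) h
      rw [hΨ1] at this; exact le_of_lt this
  -- the left-branch formula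
  have hvt : ∀ u : ℝ, u ≤ δ → vt δ Ψ Ψinv u = (1 - u) - (1 - δ) * Ψ (u / δ) := by
    intro u hu; simp [vt, hu]
  have htmem : ∀ u : ℝ, 0 < u → u ≤ δ → u / δ ∈ Set.Icc (0:ℝ) 1 :=
    fun u hu0 huδ => ⟨le_of_lt (div_pos hu0 hδ0), (div_le_one hδ0).2 huδ⟩
  have hmemH : ∀ u : ℝ, 0 < u → u ≤ δ →
      (1 - (1 - δ) * Ψ (u / δ)) ∈ Set.Ico δ 1 := by
    intro u hu0 huδ
    obtain ⟨ht0, ht1⟩ := htmem u hu0 huδ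
    have h1 : 0 < Ψ (u / δ) := hΨpos _ (div_pos hu0 hδ0) ht1
    have h2 : Ψ (u / δ) ≤ 1 := hΨle _ ht0 ht1
    constructor <;> nlinarith
  have huxpos : ∀ x : ℝ, 0 < F (μT - x) := fun x => (hFmem _).1
  have huxle : ∀ x : ℝ, 0 ≤ x → F (μT - x) ≤ δ := by
    intro x hx
    calc F (μT - x) ≤ F μT := hFm.monotone (by linarith)
    _ = δ := hFμ
  -- explicit formula for g
  have hGexpr : ∀ x ∈ Set.Ici (0:ℝ),
      g x = Finv (1 - (1 - δ) * Ψ (F (μT - x) / δ)) - μT := by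
    intro x hx
    rw [hgdef x hx, hvt _ (huxle x hx)]
    ring_nf
  -- monotonicity facts for Finv
  have hFinvMono : StrictMonoOn Finv (Set.Ioo 0 1) := by
    intro u hu v hv huv
    rw [← hFm.lt_iff_lt, hFinv u hu, hFinv v hv]; exact huv
  -- g 0 = 0
  have hg0 : g 0 = 0 := by
    rw [hGexpr 0 (Set.mem_Ici.2 le_rfl), sub_zero, hFμ, div_self (ne_of_gt hδ0), hΨ1,
      (by ring : 1 - (1 - δ) * 1 = δ), hμT, sub_self]
  -- strict monotonicity of g
  have hgm : StrictMonoOn g (Set.Ici 0) := by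
    intro x hx y hy hxy
    rw [hGexpr x hx, hGexpr y hy]
    have hF : F (μT - y) < F (μT - x) := hFm (by linarith)
    have hΨlt : Ψ (F (μT - y) / δ) < Ψ (F (μT - x) / δ) :=
      hΨm (htmem _ (huxpos y) (huxle y hy)) (htmem _ (huxpos x) (huxle x hx))
        ((div_lt_div_iff_of_pos_right hδ0).2 hF)
    have hHx := hmemH _ (huxpos x) (huxle x hx)
    have hHy := hmemH _ (huxpos y) (huxle y hy)
    have hlt : (1 - (1 - δ) * Ψ (F (μT - x) / δ)) < (1 - (1 - δ) * Ψ (F (μT - y) / δ)) := by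
      nlinarith
    have := hFinvMono ⟨lt_of_lt_of_le hδ0 hHx.1, hHx.2⟩ ⟨lt_of_lt_of_le hδ0 hHy.1, hHy.2⟩ hlt
    linarith
  -- continuity of Finv on (0,1)
  have hFinvCont : ContinuousOn Finv (Set.Ioo 0 1) := by
    intro v hv
    refine (hFinvMono.continuousAt_of_image_mem_nhds (Ioo_mem_nhds hv.1 hv.2)
      ?_).continuousWithinAt
    have himg : Finv '' Set.Ioo 0 1 = Set.univ :=
      Set.eq_univ_of_forall fun x => ⟨F x, hFmem x, hFinvF x⟩
    rw [himg]; exact Filter.univ_mem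
  -- continuity of g
  have hgc : ContinuousOn g (Set.Ici 0) := by
    have hHc : ContinuousOn (fun x => 1 - (1 - δ) * Ψ (F (μT - x) / δ)) (Set.Ici 0) := by
      refine continuousOn_const.sub (continuousOn_const.mul ?_)
      refine hΨc.comp (((hFc.comp (continuous_const.sub continuous_id)).div_const
        δ).continuousOn) ?_
      intro x hx
      exact htmem _ (huxpos x) (huxle x hx)
    have hcomp : ContinuousOn (fun x => Finv (1 - (1 - δ) * Ψ (F (μT - x) / δ)) - μT)
        (Set.Ici 0) := by
      refine (hFinvCont.comp hHc ?_).sub continuousOn_const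
      intro x hx
      have := hmemH _ (huxpos x) (huxle x hx)
      exact ⟨lt_of_lt_of_le hδ0 this.1, this.2⟩
    exact hcomp.congr hGexpr
  refine ⟨hgc, hgm, hg0, ?_⟩
  -- recovery of 𝒱
  intro u hu
  obtain ⟨hu0, hu1⟩ := hu
  rcases le_or_gt u δ with hc | hc
  · rw [if_pos hc]
    have hFinvle : Finv u ≤ μT := by
      rw [← hFm.le_iff_le, hFinv u ⟨hu0, hu1⟩, hFμ]; exact hc
    set x := μT - Finv u with hxdef
    have hx : x ∈ Set.Ici (0:ℝ) := by simp [hxdef]; linarith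
    have hμx : μT - x = Finv u := by rw [hxdef]; ring
    have hgx : g x = Finv (u + vt δ Ψ Ψinv u) - μT := by
      rw [hgdef x hx, hμx, hFinv u ⟨hu0, hu1⟩]
    have hsum : u + vt δ Ψ Ψinv u = 1 - (1 - δ) * Ψ (u / δ) := by
      rw [hvt u hc]; ring
    have hmem := hmemH u hu0 hc
    rw [← hsum] at hmem
    have : μT + g x = Finv (u + vt δ Ψ Ψinv u) := by rw [hgx]; ring
    rw [this, hFinv _ ⟨lt_of_lt_of_le hδ0 hmem.1, hmem.2⟩]
    ring
  · rw [if_neg (not_le.2 hc)]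
    have hμlt : μT < Finv u := by
      rw [← hFm.lt_iff_lt, hFinv u ⟨hu0, hu1⟩, hFμ]; exact hc
    set y := Finv u - μT with hydef
    have hy : y ∈ Set.Ici (0:ℝ) := by simp [hydef]; linarith
    obtain ⟨hz0, hgz⟩ := hginv' y hy
    set z := ginv y with hzdef
    set u' := F (μT - z) with hu'def
    have hu'0 : 0 < u' := huxpos z
    have hu'δ : u' ≤ δ := huxle z hz0
    have hH := hmemH u' hu'0 hu'δ
    have hHmem : (1 - (1 - δ) * Ψ (u' / δ)) ∈ Set.Ioo (0:ℝ) 1 :=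
      ⟨lt_of_lt_of_le hδ0 hH.1, hH.2⟩
    -- from g z = y, deduce 1 - (1-δ)Ψ(u'/δ) = u
    have hfe : Finv (1 - (1 - δ) * Ψ (u' / δ)) = Finv u := by
      have h := hGexpr z hz0
      rw [hgz, hydef] at h
      linarith
    have hHu : 1 - (1 - δ) * Ψ (u' / δ) = u := by
      have h1 := hFinv _ hHmem
      have h2 := hFinv u ⟨hu0, hu1⟩
      rw [hfe, h2] at h1
      exact h1.symm
    have hΨeq : Ψ (u' / δ) = (1 - u) / (1 - δ) := by
      rw [eq_div_iff (by linarith : (1:ℝ) - δ ≠ 0)]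
      linarith
    have hΨinveq : Ψinv ((1 - u) / (1 - δ)) = u' / δ := by
      rw [← hΨeq]
      exact (hΨinv _ (htmem u' hu'0 hu'δ)).1
    rw [vt, if_neg (not_le.2 hc), hΨinveq]
    field_simp
end
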